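/- Let G be a finitely generated pro-p group and J the kernel of the ring homomorphism ℤ_p[[G]] → ℤ/p (augmentation followed by reduction mod p). Then ⋂_{k≥1} J^k = 0, and hence the intersection of the closures of the powers of the augmentation ideal I of ℤ_p[[G]] is trivial. -/

import Mathlib

set_option linter.unusedSectionVars false

open scoped BigOperators

/-- The multiplicative group structure that `AddAut M` carried in the older Mathlib
(`e₁ * e₂ = e₂.trans e₁`, `1 = refl`, `e⁻¹ = e.symm`); Mathlib now makes `AddAut M` additive. -/
instance addAutGroupOld (M : Type*) [Add M] : Group (AddAut M) where
  mul g h := AddEquiv.trans h g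
  one := AddEquiv.refl _
  inv := AddEquiv.symm
  mul_assoc _ _ _ := rfl
  one_mul _ := rfl
  mul_one _ := rfl
  inv_mul_cancel := AddEquiv.self_trans_symm

theorem addAutOld_one_apply {M : Type*} [Add M] (m : M) : (1 : AddAut M) m = m :=
  rfl

section ContCohomology

variable (G : Type*) [Group G] [TopologicalSpace G]
variable (M : Type*) [AddCommGroup M] [TopologicalSpace M] [IsTopologicalAddGroup M]

/-- The differential on inhomogeneous cochains of a topological group `G` with
coefficients in a topological abelian group `M`, for the action `ρ`. -/
def ccd (ρ : G →* AddAut M) (n : ℕ) : ((Fin n → G) → M) →+ ((Fin (n + 1) → G) → M) where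
  toFun f := fun g =>
    ρ (g 0) (f fun i => g i.succ) +
      ∑ j : Fin (n + 1), ((-1 : ℤ) ^ ((j : ℕ) + 1)) • f (Fin.contractNth j (· * ·) g)
  map_zero' := by
    funext g
    simp
  map_add' f₁ f₂ := by
    funext g
    simp only [Pi.add_apply, map_add, smul_add, Finset.sum_add_distrib]
    abel

/-- Continuous cochains. -/
def contCochain (n : ℕ) : AddSubgroup ((Fin n → G) → M) where
  carrier := {f | Continuous f}
  zero_mem' := continuous_const
  add_mem' hf hg := hf.add hg
  neg_mem' hf := hf.neg

/-- Continuous cocycles. -/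
def contCocycle (ρ : G →* AddAut M) (n : ℕ) : AddSubgroup ((Fin n → G) → M) :=
  contCochain G M n ⊓ (ccd G M ρ n).ker

/-- Continuous coboundaries. -/
def contCoboundary (ρ : G →* AddAut M) : (n : ℕ) → AddSubgroup ((Fin n → G) → M)
  | 0 => ⊥
  | (n + 1) => (contCochain G M n).map (ccd G M ρ n)

/-- Continuous group cohomology of a topological group with coefficients in a topological
abelian group, via inhomogeneous continuous cochains. -/
def Hcont (ρ : G →* AddAut M) (n : ℕ) : Type _ :=
  contCocycle G M ρ n ⧸ (contCoboundary G M ρ n).addSubgroupOf (contCocycle G M ρ n)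

noncomputable instance (ρ : G →* AddAut M) (n : ℕ) : AddCommGroup (Hcont G M ρ n) :=
  QuotientAddGroup.Quotient.addCommGroup _

end ContCohomology

section Restriction

variable {K G : Type*} [Group K] [Group G] [TopologicalSpace K] [TopologicalSpace G]
variable (M : Type*) [AddCommGroup M] [TopologicalSpace M] [IsTopologicalAddGroup M]

/-- Restriction of cochains along a group homomorphism. -/
def resCochain (φ : K →* G) (n : ℕ) : ((Fin n → G) → M) →+ ((Fin n → K) → M) where
  toFun f := fun g => f (φ ∘ g)
  map_zero' := rfl
  map_add' _ _ := rfl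

lemma comp_contractNth (φ : K →* G) {n : ℕ} (j : Fin (n + 1)) (g : Fin (n + 1) → K) :
    (φ ∘ Fin.contractNth j (· * ·) g) = Fin.contractNth j (· * ·) (φ ∘ g) := by
  funext i
  simp only [Function.comp_apply, Fin.contractNth]
  split_ifs <;> simp

lemma resCochain_comm_ccd (φ : K →* G) (n : ℕ) (f : (Fin n → G) → M) :
    resCochain M φ (n + 1) (ccd G M 1 n f) = ccd K M 1 n (resCochain M φ n f) := by
  funext g
  simp only [resCochain, ccd, AddMonoidHom.coe_mk, ZeroHom.coe_mk, MonoidHom.one_apply,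
    addAutOld_one_apply]
  congr 1
  refine Finset.sum_congr rfl fun j _ => ?_
  rw [comp_contractNth]

lemma resCochain_continuous (φ : K →* G) (hφ : Continuous φ) (n : ℕ)
    (f : (Fin n → G) → M) (hf : Continuous f) : Continuous (resCochain M φ n f) :=
  hf.comp (continuous_pi fun i => hφ.comp (continuous_apply i))

/-- Restriction on cocycles. -/
def resCocycle (φ : K →* G) (hφ : Continuous φ) (n : ℕ) :
    contCocycle G M 1 n →+ contCocycle K M 1 n :=
  AddMonoidHom.codRestrict ((resCochain M φ n).comp (contCocycle G M 1 n).subtype) _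
    (by
      rintro ⟨f, hf⟩
      simp only [contCocycle, AddSubgroup.mem_inf] at hf ⊢
      obtain ⟨hf1, hf2⟩ := hf
      constructor
      · exact resCochain_continuous M φ hφ n f hf1
      · rw [AddMonoidHom.mem_ker] at hf2 ⊢
        show ccd K M 1 n (resCochain M φ n f) = 0
        rw [← resCochain_comm_ccd M φ n f, hf2]
        rfl)

/-- The canonical map on continuous group cohomology (with trivial coefficients) induced
by a continuous group homomorphism. -/
def Hres (φ : K →* G) (hφ : Continuous φ) (n : ℕ) : Hcont G M 1 n →+ Hcont K M 1 n :=
  QuotientAddGroup.map _ _ (resCocycle M φ hφ n)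
    (by
      intro x hx
      rw [AddSubgroup.mem_comap, AddSubgroup.mem_addSubgroupOf]
      rw [AddSubgroup.mem_addSubgroupOf] at hx
      cases n with
      | zero =>
        simp only [contCoboundary, AddSubgroup.mem_bot] at hx ⊢
        show resCochain M φ 0 (x : (Fin 0 → G) → M) = 0
        rw [hx]
        exact map_zero _
      | succ n =>
        obtain ⟨u, hu, hux⟩ := hx
        refine ⟨resCochain M φ n u, resCochain_continuous M φ hφ n u hu, ?_⟩
        show ccd K M 1 n (resCochain M φ n u) = _
        rw [← resCochain_comm_ccd M φ n u, hux]
        rfl)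

end Restriction

section Discrete

variable (G : Type*) [Group G]
variable (M : Type*) [AddCommGroup M] [TopologicalSpace M] [IsTopologicalAddGroup M]

/-- Ordinary group cohomology of a discrete group, as continuous cohomology for the
bottom (discrete) topology. -/
abbrev Hdisc (n : ℕ) : Type _ := @Hcont G _ ⊥ M _ _ _ 1 n

/-- The comparison map from the continuous cohomology of a topological group `Ghat` to
the ordinary cohomology of a (discrete) group `G`, induced by `φ : G →* Ghat`. -/
def HcompMap (Ghat : Type*) [Group Ghat] [TopologicalSpace Ghat] (φ : G →* Ghat) (n : ℕ) :
    Hcont Ghat M 1 n →+ Hdisc G M n :=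
  @Hres G Ghat _ _ ⊥ _ M _ _ _ φ continuous_bot n

end Discrete

section ProP

/-- A pro-`p` group: a compact, Hausdorff, totally disconnected topological group all of whose
finite continuous quotients are `p`-groups. -/
structure IsProPGroup (p : ℕ) (G : Type*) [Group G] [TopologicalSpace G] : Prop where
  compact : CompactSpace G
  t2 : T2Space G
  td : TotallyDisconnectedSpace G
  topGrp : IsTopologicalGroup G
  proP : ∀ (P : Type) [Group P] [Finite P] (ψ : G →* P),
    (∀ s : Set P, IsOpen (ψ ⁻¹' s)) → Function.Surjective ψ → IsPGroup p P

/-- `φ : G →* Ghat` exhibits the topological group `Ghat` as the pro-`p` completion of the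
discrete group `G`: `Ghat` is a pro-`p` group, `φ` has dense image, and every homomorphism
from `G` to a finite `p`-group factors uniquely through a continuous homomorphism on `Ghat`. -/
structure IsProPCompletion (p : ℕ) {G : Type*} [Group G] {Ghat : Type*} [Group Ghat]
    [TopologicalSpace Ghat] (φ : G →* Ghat) : Prop where
  compact : CompactSpace Ghat
  t2 : T2Space Ghat
  td : TotallyDisconnectedSpace Ghat
  topGrp : IsTopologicalGroup Ghat
  dense : DenseRange φ
  proP : ∀ (P : Type) [Group P] [Finite P] (ψ : Ghat →* P),
    (∀ s : Set P, IsOpen (ψ ⁻¹' s)) → Function.Surjective ψ → IsPGroup p P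
  lift : ∀ (P : Type) [Group P] [Finite P], IsPGroup p P → ∀ f : G →* P,
    ∃! g : Ghat →* P, (∀ s : Set P, IsOpen (g ⁻¹' s)) ∧ g.comp φ = f

/-- Additive version of `IsProPCompletion`. -/
structure IsProPCompletionAdd (p : ℕ) {G : Type*} [AddGroup G] {Ghat : Type*} [AddGroup Ghat]
    [TopologicalSpace Ghat] (φ : G →+ Ghat) : Prop where
  compact : CompactSpace Ghat
  t2 : T2Space Ghat
  td : TotallyDisconnectedSpace Ghat
  topGrp : IsTopologicalAddGroup Ghat
  dense : DenseRange φ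
  proP : ∀ (P : Type) [AddGroup P] [Finite P] (ψ : Ghat →+ P),
    (∀ s : Set P, IsOpen (ψ ⁻¹' s)) → Function.Surjective ψ → IsPGroup p (Multiplicative P)
  lift : ∀ (P : Type) [AddGroup P] [Finite P], IsPGroup p (Multiplicative P) → ∀ f : G →+ P,
    ∃! g : Ghat →+ P, (∀ s : Set P, IsOpen (g ⁻¹' s)) ∧ g.comp φ = f

/-- A free pro-`p` group: the pro-`p` completion of a free group. -/
def IsFreeProPGroup (p : ℕ) (F : Type*) [Group F] [TopologicalSpace F] : Prop :=
  ∃ (X : Type) (φ : FreeGroup X →* F), IsProPCompletion p φ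

/-- The lower central series of a topological group, defined with closures:
`gammaHat F 0 = F` and `gammaHat F (k+1)` is the closure of `[gammaHat F k, F]`.
(Indexing: `gammaHat F k` is `γ_{k+1}` of the paper.) -/
def gammaHat (F : Type*) [Group F] [TopologicalSpace F] [IsTopologicalGroup F] :
    ℕ → Subgroup F
  | 0 => ⊤
  | (k + 1) => Subgroup.topologicalClosure ⁅gammaHat F k, (⊤ : Subgroup F)⁆

end ProP

section ZModTop

instance (n : ℕ) : TopologicalSpace (ZMod n) := ⊥
instance (n : ℕ) : DiscreteTopology (ZMod n) := ⟨rfl⟩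
instance (n : ℕ) : IsTopologicalAddGroup (ZMod n) where
  continuous_add := continuous_of_discreteTopology
  continuous_neg := continuous_of_discreteTopology

end ZModTop

section CompletedGroupRing

open scoped Classical

noncomputable instance monoidAlgebraTopology (k H : Type*) [Semiring k] [TopologicalSpace k] :
    TopologicalSpace (MonoidAlgebra k H) :=
  TopologicalSpace.induced (fun f h => f.coeff h) Pi.topologicalSpace

variable (p : ℕ) [Fact p.Prime] (G : Type*) [Group G] [TopologicalSpace G] [IsTopologicalGroup G]

/-- Transition maps of the inverse system `(ℤ_p[G/N])_N`. -/
noncomputable def cgrTrans (N M : OpenNormalSubgroup G) (h : N.toSubgroup ≤ M.toSubgroup) :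
    MonoidAlgebra ℤ_[p] (G ⧸ N.toSubgroup) →+* MonoidAlgebra ℤ_[p] (G ⧸ M.toSubgroup) :=
  MonoidAlgebra.mapDomainRingHom ℤ_[p]
    (QuotientGroup.map N.toSubgroup M.toSubgroup (MonoidHom.id G) (by simpa using h))

/-- The completed group ring `ℤ_p[[G]]` of a profinite group `G`, realized as the inverse
limit of the group rings `ℤ_p[G/N]` over the open normal subgroups `N` of `G`. -/
noncomputable def CompletedGroupRing :
    Subring (Π N : OpenNormalSubgroup G, MonoidAlgebra ℤ_[p] (G ⧸ N.toSubgroup)) where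
  carrier := {x | ∀ (N M : OpenNormalSubgroup G) (h : N.toSubgroup ≤ M.toSubgroup),
    cgrTrans p G N M h (x N) = x M}
  zero_mem' := by intro N M h; simp
  one_mem' := by intro N M h; simp
  add_mem' := by intro x y hx hy N M h; simp [map_add, hx N M h, hy N M h]
  mul_mem' := by intro x y hx hy N M h; simp [map_mul, hx N M h, hy N M h]
  neg_mem' := by intro x hx N M h; simp [map_neg, hx N M h]

/-- The top open normal subgroup. -/
def cgrTop : OpenNormalSubgroup G :=
  { toOpenSubgroup := ⊤, isNormal' := ⟨fun _ h _ => by simpa using h⟩ }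

/-- The augmentation `ℤ_p[[G]] → ℤ_p`. -/
noncomputable def cgrAug : CompletedGroupRing p G →+* ℤ_[p] :=
  (((MonoidAlgebra.lift ℤ_[p] ℤ_[p] (G ⧸ (cgrTop G).toSubgroup)) 1).toRingHom).comp
    (((Pi.evalRingHom _ (cgrTop G)).comp (CompletedGroupRing p G).subtype))

/-- The augmentation ideal `I` of `ℤ_p[[G]]`. -/
noncomputable def cgrAugIdeal : Ideal (CompletedGroupRing p G) := RingHom.ker (cgrAug p G)

/-- The radical `J` of `ℤ_p[[G]]`: the kernel of `ℤ_p[[G]] → ℤ/p`. -/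
noncomputable def cgrRadical : Ideal (CompletedGroupRing p G) :=
  RingHom.ker ((PadicInt.toZMod (p := p)).comp (cgrAug p G))

/-- The canonical (multiplicative) map `G → ℤ_p[[G]]`. -/
noncomputable def cgrOf : G →* CompletedGroupRing p G where
  toFun g := ⟨fun N => MonoidAlgebra.single (QuotientGroup.mk g) 1, by
    intro N M h
    simp [cgrTrans, MonoidAlgebra.mapDomainRingHom, Finsupp.mapDomain_single]⟩
  map_one' := by
    apply Subtype.ext
    funext N
    simp [MonoidAlgebra.one_def]
  map_mul' g g' := by
    apply Subtype.ext
    funext N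
    simp [MonoidAlgebra.single_mul_single]

end CompletedGroupRing

/-! For an open normal subgroup `N`, the quotient `P = G/N` is a finite `p`-group, and in `k[P]`
(`k` any commutative ring) the elements whose augmentation is divisible by `p` have a power
inside `p k[P]`. This goes by induction on `|P|`: pick a central `z ≠ 1` with `z ^ p ^ n = 1`
and put `ζ = single z 1`. By induction, the image in `k[P/⟨z⟩]` of a long enough product is
divisible by `p`, so the product lies in `p k[P] + k[P] (ζ - 1)`; a product of `p ^ n` such
elements lies in `p k[P] + k[P] (ζ - 1) ^ p ^ n`, and `(ζ - 1) ^ p ^ n ≡ ζ ^ p ^ n - 1 = 0`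
modulo `p`.

So a high power of `J` maps into `p ^ j ℤ_p[G/N]`, which is a closed condition on `ℤ_p[[G]]`,
and an element satisfying it for all `N` and `j` vanishes. As `I ⊆ J`, the same holds for `I`. -/

open scoped Pointwise

theorem Nat.Prime.natCast_dvd_sub_one_pow_of_pow_eq_one {R : Type*} [Ring R] {p : ℕ}
    (hp : p.Prime) {n : ℕ} {x : R} (hx : x ^ p ^ n = 1) : (p : R) ∣ (x - 1) ^ p ^ n := by
  obtain ⟨r, hr⟩ := (Commute.neg_one_right x).exists_add_pow_prime_pow_eq hp n
  have hsign : (p : R) ∣ 1 + (-1) ^ p ^ n := by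
    rcases Nat.even_or_odd (p ^ n) with he | ho
    · rw [he.neg_one_pow, hp.even_iff.1 (Nat.even_pow.1 he).1]
      norm_num
    · simp [ho.neg_one_pow]
  rw [sub_eq_add_neg, hr, hx, mul_assoc, mul_assoc]
  exact dvd_add hsign (dvd_mul_right _ _)

section CentralDivisibility

variable {R : Type*} [Ring R] {π : R}

theorem Set.setOf_dvd_pow_subset (hπ : ∀ x, Commute π x) (j : ℕ) :
    {y : R | π ∣ y} ^ j ⊆ {y | π ^ j ∣ y} := by
  induction j with
  | zero => simp
  | succ j ih =>
    rw [pow_succ]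
    intro y hy
    obtain ⟨a, ha, _, ⟨c, rfl⟩, rfl⟩ := Set.mem_mul.1 hy
    obtain ⟨d, rfl⟩ := ih ha
    exact ⟨d * c, by rw [mul_assoc, ← mul_assoc d, ← (hπ d).eq, pow_succ]; noncomm_ring⟩

theorem Set.pow_subset_setOf_pow_dvd {S : Set R} {m : ℕ} (hπ : ∀ x, Commute π x)
    (hS : S ^ m ⊆ {y | π ∣ y}) {j k : ℕ} (hk : m * j ≤ k) :
    S ^ k ⊆ {y | π ^ j ∣ y} := by
  obtain ⟨r, rfl⟩ := Nat.exists_eq_add_of_le hk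
  rw [pow_add, pow_mul]
  intro y hy
  obtain ⟨a, ha, b, -, rfl⟩ := Set.mem_mul.1 hy
  exact (Set.setOf_dvd_pow_subset hπ j (Set.pow_subset_pow_left hS ha)).mul_right b

theorem Set.setOf_add_mul_pow_subset {D : R} (hπ : ∀ x, Commute π x) (hD : ∀ x, Commute D x)
    (t : ℕ) :
    {y : R | ∃ w r, y = π * w + r * D} ^ t ⊆ {y | ∃ w r, y = π * w + r * D ^ t} := by
  induction t with
  | zero => exact fun y hy => ⟨0, y, by simp_all⟩
  | succ t ih =>
    rw [pow_succ]
    intro y hy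
    obtain ⟨a, ha, _, ⟨w₂, r₂, rfl⟩, rfl⟩ := Set.mem_mul.1 hy
    obtain ⟨w₁, r₁, rfl⟩ := ih ha
    refine ⟨w₁ * (π * w₂ + r₂ * D) + r₁ * D ^ t * w₂, r₁ * r₂, ?_⟩
    have h₁ : r₁ * D ^ t * (π * w₂) = π * (r₁ * D ^ t * w₂) := by
      rw [← mul_assoc, mul_assoc r₁, ← (hπ _).eq, ← mul_assoc, ← (hπ r₁).eq]
      simp only [mul_assoc]
    have h₂ : r₁ * D ^ t * (r₂ * D) = r₁ * r₂ * D ^ (t + 1) := by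
      rw [mul_assoc r₁, ← mul_assoc (D ^ t), ((hD r₂).pow_left t).eq, pow_succ, mul_assoc,
        mul_assoc]
    rw [add_mul, mul_add (r₁ * D ^ t), h₁, h₂]
    noncomm_ring

end CentralDivisibility

namespace MonoidAlgebra

variable {k : Type*} [CommRing k]

noncomputable def augmentation (P : Type*) [Group P] : k[P] →+* k :=
  ((lift k k P) 1).toRingHom

variable {P Q : Type*} [Group P] [Group Q]

@[simp]
theorem augmentation_single (g : P) (c : k) : augmentation P (single g c) = c := by
  simp [augmentation]

@[simp]
theorem augmentation_mapDomainRingHom (f : P →* Q) (x : k[P]) :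
    augmentation Q (mapDomainRingHom k f x) = augmentation P x := by
  induction x using induction_linear with
  | zero => simp
  | add x y hx hy => simp only [map_add, hx, hy]
  | single g c => simp

theorem mapDomain_surjective {f : P → Q} (hf : f.Surjective) :
    (mapDomain f : k[P] → k[Q]).Surjective := by
  intro y
  obtain ⟨c, hc⟩ := Finsupp.mapDomain_surjective hf y.coeff
  exact ⟨ofCoeff c, by ext; simp [hc]⟩

theorem natCast_dvd_coeff {n : ℕ} {y : k[P]} (hy : (n : k[P]) ∣ y)
    (g : P) : (n : k) ∣ y.coeff g := by
  obtain ⟨w, rfl⟩ := hy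
  rw [natCast_def, coeff_single_one_mul]
  exact dvd_mul_right _ _

theorem natCast_dvd_of_subsingleton [Subsingleton P] {p : ℕ} {y : k[P]}
    (hy : (p : k) ∣ augmentation P y) : (p : k[P]) ∣ y := by
  have hsingle : ∀ x : k[P], x = single 1 (augmentation P x) := by
    intro x
    induction x using induction_linear with
    | zero => simp
    | add x x' hx hx' => rw [map_add, single_add, ← hx, ← hx']
    | single g c => rw [Subsingleton.elim g 1, augmentation_single]
  obtain ⟨c, hc⟩ := hy
  exact ⟨single 1 c, by rw [hsingle y, hc, natCast_def, single_mul_single, one_mul]⟩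

theorem exists_eq_mul_single_sub_one_of_mapDomain_eq_zero [Finite P] {z : P}
    {f : k[P]} (hf : mapDomain (QuotientGroup.mk : P → P ⧸ Subgroup.zpowers z) f = 0) :
    ∃ r, f = r * (single z 1 - 1) := by
  suffices h : ∀ f : k[P], ∃ r, f - mapDomain Quotient.out
      (mapDomain (QuotientGroup.mk : P → P ⧸ Subgroup.zpowers z) f) = r * (single z 1 - 1) by
    simpa [hf] using h f
  intro f
  induction f using induction_linear with
  | zero => exact ⟨0, by simp⟩
  | add f g hf hg =>
    obtain ⟨rf, hrf⟩ := hf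
    obtain ⟨rg, hrg⟩ := hg
    exact ⟨rf + rg, by rw [mapDomain_add, mapDomain_add, add_mul, ← hrf, ← hrg]; abel⟩
  | single g c =>
    -- `g = w * z ^ n` for the chosen representative `w` of `g`'s coset, so
    -- `single g c - single w c = single w c * (ζ ^ n - 1)`.
    set w := (QuotientGroup.mk g : P ⧸ Subgroup.zpowers z).out
    have hw : w⁻¹ * g ∈ Subgroup.zpowers z := QuotientGroup.eq.1 (Quotient.out_eq _)
    obtain ⟨n, hn : z ^ n = w⁻¹ * g⟩ := mem_powers_iff_mem_zpowers.2 hw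
    refine ⟨single w c * ∑ i ∈ Finset.range n, single z 1 ^ i, ?_⟩
    rw [mul_assoc, geom_sum_mul, single_pow, one_pow, hn, mapDomain_single, mapDomain_single,
      mul_sub, single_mul_single, mul_one, mul_inv_cancel_left, mul_one]

theorem setOf_dvd_augmentation_pow_subset_of_quotient {p : ℕ} (hp : p.Prime) [Finite P] {z : P}
    (hz : z ∈ Subgroup.center P) {n : ℕ} (hzn : z ^ p ^ n = 1) [(Subgroup.zpowers z).Normal]
    {m : ℕ} (hm : {x : k[P ⧸ Subgroup.zpowers z] | (p : k) ∣ augmentation _ x} ^ m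
      ⊆ {y | (p : k[P ⧸ Subgroup.zpowers z]) ∣ y}) :
    {x : k[P] | (p : k) ∣ augmentation P x} ^ (m * p ^ n)
      ⊆ {y | (p : k[P]) ∣ y} := by
  set φ := mapDomainRingHom k (QuotientGroup.mk' (Subgroup.zpowers z))
  set ζ : k[P] := single z 1
  have hπ : ∀ x : k[P], Commute (p : k[P]) x := Nat.cast_commute p
  have hD : ∀ x : k[P], Commute (ζ - 1) x := fun x =>
    (single_commute (fun g => (Subgroup.mem_center_iff.1 hz g).symm) (Commute.all 1) x).sub_left
      (Commute.one_left x)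
  have hmod : {x : k[P] | (p : k) ∣ augmentation P x} ^ m
      ⊆ {y | ∃ w r, y = p * w + r * (ζ - 1)} := by
    intro y hy
    have hφy : (p : k[_]) ∣ φ y := by
      refine hm (Set.pow_subset_pow_left ?_ (Set.image_pow φ _ m ▸ Set.mem_image_of_mem φ hy))
      rintro _ ⟨x, hx, rfl⟩
      show (p : k) ∣ augmentation _ (φ x)
      rwa [augmentation_mapDomainRingHom]
    obtain ⟨w', hw'⟩ := hφy
    obtain ⟨w, rfl⟩ := mapDomain_surjective (k := k) (QuotientGroup.mk'_surjective _) w'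
    obtain ⟨r, hr⟩ :=
      exists_eq_mul_single_sub_one_of_mapDomain_eq_zero (f := y - (p : k[P]) * w)
      (show φ (y - p * w) = 0 by rw [map_sub, map_mul, map_natCast, hw']; exact sub_self _)
    exact ⟨w, r, by rw [← hr]; abel⟩
  rw [pow_mul]
  intro y hy
  obtain ⟨w, r, rfl⟩ := Set.setOf_add_mul_pow_subset hπ hD _ (Set.pow_subset_pow_left hmod hy)
  obtain ⟨v, hv⟩ := hp.natCast_dvd_sub_one_pow_of_pow_eq_one (x := ζ) (by
    rw [single_pow, one_pow, hzn, one_def])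
  exact ⟨w + r * v, by rw [hv, mul_add, ← mul_assoc r, ← (hπ r).eq, mul_assoc]⟩

end MonoidAlgebra

theorem IsPGroup.exists_setOf_dvd_augmentation_pow_subset {p : ℕ} [Fact p.Prime] (k : Type*)
    [CommRing k] {P : Type*} [Group P] [Finite P] (hP : IsPGroup p P) :
    ∃ m, {x : MonoidAlgebra k P | (p : k) ∣ MonoidAlgebra.augmentation P x} ^ m
      ⊆ {y | (p : MonoidAlgebra k P) ∣ y} := by
  induction h : Nat.card P using Nat.strong_induction_on generalizing P with
  | _ c ih =>
    rcases subsingleton_or_nontrivial P with hP₁ | hP₁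
    · exact ⟨1, by simpa using fun y => MonoidAlgebra.natCast_dvd_of_subsingleton⟩
    have := hP.center_nontrivial
    obtain ⟨⟨z, hz⟩, hz₁⟩ := exists_ne (1 : Subgroup.center P)
    have : (Subgroup.zpowers z).Normal := ⟨fun h hh g => by
      rwa [Subgroup.mem_center_iff.1 (Subgroup.zpowers_le.2 hz hh) g, mul_inv_cancel_right]⟩
    have hcard : Nat.card (P ⧸ Subgroup.zpowers z) < c := by
      rw [← h, Subgroup.card_eq_card_quotient_mul_card_subgroup (Subgroup.zpowers z),
        Nat.card_zpowers]
      exact lt_mul_of_one_lt_right Nat.card_pos <| lt_of_le_of_ne (orderOf_pos z)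
        fun h1 => hz₁ (Subtype.ext (orderOf_eq_one_iff.1 h1.symm))
    obtain ⟨m, hm⟩ := ih _ hcard (hP.to_quotient _) rfl
    obtain ⟨n, hn⟩ := hP z
    exact ⟨m * p ^ n,
      MonoidAlgebra.setOf_dvd_augmentation_pow_subset_of_quotient Fact.out hz hn hm⟩

theorem IsProPGroup.isPGroup_quotient {p : ℕ} {G : Type} [Group G] [TopologicalSpace G]
    [IsTopologicalGroup G] (hG : IsProPGroup p G) (N : OpenNormalSubgroup G) :
    IsPGroup p (G ⧸ N.toSubgroup) :=
  have := hG.compact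
  hG.proP _ (QuotientGroup.mk' N.toSubgroup)
    (fun s => (isOpen_discrete s).preimage continuous_quot_mk) (QuotientGroup.mk'_surjective _)

section CompletedGroupRing

variable (p : ℕ) [Fact p.Prime] (G : Type) [Group G] [TopologicalSpace G] [IsTopologicalGroup G]

noncomputable def cgrProj (N : OpenNormalSubgroup G) :
    CompletedGroupRing p G →+* MonoidAlgebra ℤ_[p] (G ⧸ N.toSubgroup) :=
  (Pi.evalRingHom _ N).comp (CompletedGroupRing p G).subtype

variable {p G}

theorem continuous_cgrProj (N : OpenNormalSubgroup G) : Continuous (cgrProj p G N) :=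
  (continuous_apply N).comp continuous_subtype_val

theorem augmentation_cgrProj (N : OpenNormalSubgroup G) (x : CompletedGroupRing p G) :
    MonoidAlgebra.augmentation _ (cgrProj p G N x) = cgrAug p G x := calc
  _ = MonoidAlgebra.augmentation _ (cgrTrans p G N (cgrTop G) le_top (x.1 N)) :=
    (MonoidAlgebra.augmentation_mapDomainRingHom _ _).symm
  _ = cgrAug p G x := by rw [x.2 N (cgrTop G) le_top]; rfl

theorem mem_cgrRadical_iff {x : CompletedGroupRing p G} :
    x ∈ cgrRadical p G ↔ (p : ℤ_[p]) ∣ cgrAug p G x := by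
  rw [cgrRadical, RingHom.mem_ker, RingHom.comp_apply, ← RingHom.mem_ker, PadicInt.ker_toZMod,
    PadicInt.maximalIdeal_eq_span_p, Ideal.mem_span_singleton]

theorem cgrAugIdeal_le_cgrRadical : cgrAugIdeal p G ≤ cgrRadical p G := fun x hx => by
  rw [mem_cgrRadical_iff, (RingHom.mem_ker).1 hx]
  exact dvd_zero _

theorem CompletedGroupRing.eq_zero_of_forall_dvd_coeff {x : CompletedGroupRing p G}
    (hx : ∀ N j g, (p : ℤ_[p]) ^ j ∣ (cgrProj p G N x).coeff g) : x = 0 := by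
  have hcoeff : ∀ N g, (cgrProj p G N x).coeff g = 0 := fun N g =>
    PadicInt.ext_of_toZModPow.1 fun j => by
      rw [map_zero, ← RingHom.mem_ker, PadicInt.ker_toZModPow]
      exact Ideal.mem_span_singleton.2 (hx N j g)
  exact Subtype.ext (funext fun N => MonoidAlgebra.ext (Finsupp.ext (hcoeff N)))

variable (p G) in
def cgrCoeffDvd (N : OpenNormalSubgroup G) (j : ℕ) : AddSubgroup (CompletedGroupRing p G) where
  carrier := {x | ∀ g, (p : ℤ_[p]) ^ j ∣ (cgrProj p G N x).coeff g}
  zero_mem' g := by simp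
  add_mem' hx hy g := by simpa using dvd_add (hx g) (hy g)
  neg_mem' hx g := by simpa using (hx g).neg_right

theorem isClosed_cgrCoeffDvd (N : OpenNormalSubgroup G) (j : ℕ) :
    IsClosed (cgrCoeffDvd p G N j : Set (CompletedGroupRing p G)) := by
  have hdvd (a : ℤ_[p]) : (p : ℤ_[p]) ^ j ∣ a ↔ ‖a‖ ≤ (p : ℝ) ^ (-(j : ℤ)) := by
    rw [PadicInt.norm_le_pow_iff_mem_span_pow, Ideal.mem_span_singleton]
  have hcoeff : ∀ g, Continuous fun y : MonoidAlgebra ℤ_[p] (G ⧸ N.toSubgroup) => y.coeff g :=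
    fun g => (continuous_apply g).comp continuous_induced_dom
  simp only [cgrCoeffDvd, AddSubgroup.coe_set_mk, AddSubmonoid.coe_set_mk, hdvd, Set.ofPred_forall]
  exact isClosed_iInter fun g => isClosed_le
    (continuous_norm.comp <| (hcoeff g).comp (continuous_cgrProj N)) continuous_const

theorem IsProPGroup.exists_cgrRadical_pow_subset (hG : IsProPGroup p G) (N : OpenNormalSubgroup G)
    (j : ℕ) : ∃ m, ∀ k ≥ m, (cgrRadical p G : Set (CompletedGroupRing p G)) ^ k
      ⊆ cgrCoeffDvd p G N j := by
  have := hG.compact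
  obtain ⟨m, hm⟩ := (hG.isPGroup_quotient N).exists_setOf_dvd_augmentation_pow_subset ℤ_[p]
  refine ⟨m * j, fun k hk x hx g => ?_⟩
  rw [← Nat.cast_pow]
  refine MonoidAlgebra.natCast_dvd_coeff ?_ g
  rw [Nat.cast_pow]
  refine Set.pow_subset_setOf_pow_dvd (Nat.cast_commute p) hm hk ?_
  refine Set.pow_subset_pow_left ?_
    (Set.image_pow (cgrProj p G N) _ k ▸ Set.mem_image_of_mem _ hx)
  rintro _ ⟨y, hy, rfl⟩
  rwa [Set.mem_ofPred_eq, augmentation_cgrProj, ← mem_cgrRadical_iff]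

theorem IsProPGroup.eq_zero_of_mem_closure_pow (hG : IsProPGroup p G)
    {S : Set (CompletedGroupRing p G)} (hS : S ⊆ cgrRadical p G) {x : CompletedGroupRing p G}
    (hx : ∀ k, x ∈ closure (AddSubgroup.closure (S ^ (k + 1)) : Set (CompletedGroupRing p G))) :
    x = 0 := by
  refine CompletedGroupRing.eq_zero_of_forall_dvd_coeff fun N j => ?_
  obtain ⟨m, hm⟩ := hG.exists_cgrRadical_pow_subset N j
  refine closure_minimal ?_ (isClosed_cgrCoeffDvd N j) (hx m)
  exact (AddSubgroup.closure_le _).2 ((Set.pow_subset_pow_left hS).trans (hm _ m.le_succ))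

end CompletedGroupRing

open scoped Pointwise in
theorem statement7_general (p : ℕ) [Fact p.Prime]
    (G : Type) [Group G] [TopologicalSpace G] [IsTopologicalGroup G]
    (hG : IsProPGroup p G) :
    (∀ x : CompletedGroupRing p G,
        (∀ k : ℕ, x ∈ AddSubgroup.closure (((cgrRadical p G : Set _)) ^ (k + 1))) → x = 0) ∧
      (⋂ k : ℕ,
          closure (SetLike.coe (AddSubgroup.closure
            ((cgrAugIdeal p G : Set (CompletedGroupRing p G)) ^ (k + 1)))))
        = {0} :=
  ⟨fun _ hx => hG.eq_zero_of_mem_closure_pow subset_rfl fun k => subset_closure (hx k),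
    Set.eq_singleton_iff_unique_mem.2
      ⟨Set.mem_iInter.2 fun _ => subset_closure (zero_mem _),
        fun _ hx =>
          hG.eq_zero_of_mem_closure_pow cgrAugIdeal_le_cgrRadical (Set.mem_iInter.1 hx)⟩⟩

open scoped Pointwise in
/-- Let `G` be a finitely generated pro-`p` group and `J` the kernel of the
ring homomorphism `ℤ_p[[G]] → ℤ/p` (augmentation followed by reduction mod `p`). Then
`⋂_{k ≥ 1} J^k = 0`, and hence the intersection of the closures of the powers of the
augmentation ideal `I` of `ℤ_p[[G]]` is trivial.  (Since `ℤ_p[[G]]` need not be commutative,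
the `k`-th power of an ideal is rendered as the additive subgroup generated by `k`-fold
products of its elements.) -/
theorem statement7 (p : ℕ) [Fact p.Prime]
    (G : Type) [Group G] [TopologicalSpace G] [IsTopologicalGroup G]
    (hG : IsProPGroup p G)
    (hfg : ∃ S : Finset G, Subgroup.topologicalClosure (Subgroup.closure (S : Set G)) = ⊤) :
    (∀ x : CompletedGroupRing p G,
        (∀ k : ℕ, x ∈ AddSubgroup.closure (((cgrRadical p G : Set _)) ^ (k + 1))) → x = 0) ∧
      (⋂ k : ℕ,
          closure (SetLike.coe (AddSubgroup.closure
            ((cgrAugIdeal p G : Set (CompletedGroupRing p G)) ^ (k + 1)))))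
        = {0} :=
  statement7_general p G hG
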